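/- arXiv:1806.05739 — 3 statements merged into one kernel-verified Lean document; each statement's English description precedes it below -/
import Mathlib

section
/- Let k be a real number, let c be a nonzero real number satisfying c² − kc − 1 = 0, and let x₁, x₂ be real numbers with x₁ + x₂ ≠ 0 and (1 − x₁x₂)/(x₁ + x₂) = c. With the sequences (aₙ), (bₙ), (Aₙ), (Bₙ) defined by a₁ = 0, b₁ = 1, aₙ = bₙ₋₁, bₙ = aₙ₋₁ + k·bₙ₋₁ for n ≥ 2, and A₁ = −k, B₁ = 1, Aₙ = Bₙ₋₁ − k·Aₙ₋₁, Bₙ = Aₙ₋₁ for n ≥ 2, one has for every n ≥ 2: ((1 − x₁x₂)/(x₁ + x₂))ⁿ = aₙ + bₙ·((1 − x₁x₂)/(x₁ + x₂)) and ((x₁ + x₂)/(1 − x₁x₂))ⁿ = Aₙ + Bₙ·((1 − x₁x₂)/(x₁ + x₂)). -/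
/-!
Put `c = (1 - x₁x₂)/(x₁ + x₂)`, so that `c² = kc + 1` and `c⁻¹ = c - k`. Multiplying
`a + bc` by `c`, resp. by `c - k`, and reducing with `c² = kc + 1` gives `b + (a + kb)c`,
resp. `(b - ka) + ac`: these are exactly the two recurrences, so both identities follow by
induction on `n`, starting from `n = 1`.
-/

theorem inv_eq_sub_of_sq_sub_mul_sub_one {K : Type*} [Field K] {k c : K}
    (hq : c ^ 2 - k * c - 1 = 0) : c⁻¹ = c - k :=
  inv_eq_of_mul_eq_one_right (by linear_combination hq)

section Recurrence

variable {R : Type*} [CommRing R] {k c : R}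

theorem pow_eq_add_mul_of_recurrence (hq : c ^ 2 - k * c - 1 = 0) (a b : ℕ → R)
    (ha1 : a 1 = 0) (hb1 : b 1 = 1)
    (ha : ∀ n ≥ 2, a n = b (n - 1)) (hb : ∀ n ≥ 2, b n = a (n - 1) + k * b (n - 1)) :
    ∀ n ≥ 1, c ^ n = a n + b n * c := by
  intro n hn
  induction n, hn using Nat.le_induction with
  | base => simp [ha1, hb1]
  | succ n hn ih =>
    rw [pow_succ, ih, ha (n + 1) (by omega), hb (n + 1) (by omega), Nat.add_sub_cancel]
    linear_combination b n * hq

theorem sub_pow_eq_add_mul_of_recurrence (hq : c ^ 2 - k * c - 1 = 0) (A B : ℕ → R)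
    (hA1 : A 1 = -k) (hB1 : B 1 = 1)
    (hA : ∀ n ≥ 2, A n = B (n - 1) - k * A (n - 1)) (hB : ∀ n ≥ 2, B n = A (n - 1)) :
    ∀ n ≥ 1, (c - k) ^ n = A n + B n * c := by
  intro n hn
  induction n, hn using Nat.le_induction with
  | base => rw [hA1, hB1]; ring
  | succ n hn ih =>
    rw [pow_succ, ih, hA (n + 1) (by omega), hB (n + 1) (by omega), Nat.add_sub_cancel]
    linear_combination B n * hq

end Recurrence

theorem stmt_10_general (k c x₁ x₂ : ℝ) (hq : c ^ 2 - k * c - 1 = 0)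
    (h : (1 - x₁ * x₂) / (x₁ + x₂) = c)
    (a b A B : ℕ → ℝ)
    (ha1 : a 1 = 0) (hb1 : b 1 = 1)
    (ha : ∀ n ≥ 2, a n = b (n - 1)) (hb : ∀ n ≥ 2, b n = a (n - 1) + k * b (n - 1))
    (hA1 : A 1 = -k) (hB1 : B 1 = 1)
    (hA : ∀ n ≥ 2, A n = B (n - 1) - k * A (n - 1)) (hB : ∀ n ≥ 2, B n = A (n - 1)) :
    ∀ n ≥ 2,
      ((1 - x₁ * x₂) / (x₁ + x₂)) ^ n = a n + b n * ((1 - x₁ * x₂) / (x₁ + x₂)) ∧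
      ((x₁ + x₂) / (1 - x₁ * x₂)) ^ n = A n + B n * ((1 - x₁ * x₂) / (x₁ + x₂)) := by
  intro n hn
  have hinv : (x₁ + x₂) / (1 - x₁ * x₂) = c - k := by
    rw [← inv_div, h, inv_eq_sub_of_sq_sub_mul_sub_one hq]
  rw [h, hinv]
  exact ⟨pow_eq_add_mul_of_recurrence hq a b ha1 hb1 ha hb n (by omega),
    sub_pow_eq_add_mul_of_recurrence hq A B hA1 hB1 hA hB n (by omega)⟩

theorem stmt_10 (k c x₁ x₂ : ℝ) (hc : c ≠ 0) (hq : c ^ 2 - k * c - 1 = 0)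
    (hx : x₁ + x₂ ≠ 0) (h : (1 - x₁ * x₂) / (x₁ + x₂) = c)
    (a b A B : ℕ → ℝ)
    (ha1 : a 1 = 0) (hb1 : b 1 = 1)
    (ha : ∀ n ≥ 2, a n = b (n - 1)) (hb : ∀ n ≥ 2, b n = a (n - 1) + k * b (n - 1))
    (hA1 : A 1 = -k) (hB1 : B 1 = 1)
    (hA : ∀ n ≥ 2, A n = B (n - 1) - k * A (n - 1)) (hB : ∀ n ≥ 2, B n = A (n - 1)) :
    ∀ n ≥ 2,
      ((1 - x₁ * x₂) / (x₁ + x₂)) ^ n = a n + b n * ((1 - x₁ * x₂) / (x₁ + x₂)) ∧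
      ((x₁ + x₂) / (1 - x₁ * x₂)) ^ n = A n + B n * ((1 - x₁ * x₂) / (x₁ + x₂)) :=
  stmt_10_general k c x₁ x₂ hq h a b A B ha1 hb1 ha hb hA1 hB1 hA hB
end

section
/- Let φ = (1 + √5)/2 and set t = (√(φ¹⁰ + 1) − φ⁵)^{1/5}. Then (1 − φ·t)/(φ + t) = √5/(1 + (5^{3/4}·((√5 − 1)/2)^{5/2} − 1)^{1/5}) − (√5 + 1)/2. -/
/-!
Write ψ = φ⁻¹ = (√5 - 1)/2. Binet's formula for `fib 5 = 5` gives `φ⁵ + ψ⁵ = 5√5`, i.e.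
`1 + ψ¹⁰ = 5√5 ψ⁵`, so `√(φ¹⁰ + 1) - φ⁵ = φ⁵ (√(1 + ψ¹⁰) - 1) = φ⁵ (5^{3/4} ψ^{5/2} - 1)`.
Hence `t = φ u` with `u = (5^{3/4} ψ^{5/2} - 1)^{1/5}`, and the identity becomes
`(1 - φ² u)/(φ (1 + u)) = √5/(1 + u) - φ`, which only uses `φ (√5 - φ) = 1`.
-/

open Real

section

-- Kept local: the notation `φ` would clash with the binder `φ` of `stmt_17`.
open goldenRatio

lemma one_le_sqrt_one_add_pow_ten (a : ℝ) : 1 ≤ √(1 + a ^ 10) :=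
  one_le_sqrt.mpr (le_add_of_nonneg_right (by positivity))

lemma rpow_one_div_five_sqrt_pow_ten_add_one_sub {a : ℝ} (ha : 0 < a) :
    (√(a ^ 10 + 1) - a ^ 5) ^ ((1 : ℝ) / 5) = a * (√(1 + a⁻¹ ^ 10) - 1) ^ ((1 : ℝ) / 5) := by
  have hfactor : a ^ 10 + 1 = (a ^ 5) ^ 2 * (1 + a⁻¹ ^ 10) := by field_simp
  rw [hfactor, sqrt_mul (by positivity), sqrt_sq (by positivity), ← mul_sub_one,
    mul_rpow (by positivity) (sub_nonneg.mpr (one_le_sqrt_one_add_pow_ten _)), one_div,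
    show (5 : ℝ) = (5 : ℕ) by norm_num, pow_rpow_inv_natCast ha.le (by norm_num)]

lemma goldenRatio_pow_five_sub_goldenConj_pow_five : φ ^ 5 - ψ ^ 5 = 5 * √5 := by
  have h := coe_fib_eq 5
  rw [show Nat.fib 5 = 5 by rfl, eq_div_iff (by positivity)] at h
  push_cast at h
  linarith

lemma one_add_inv_goldenRatio_pow_ten : 1 + φ⁻¹ ^ 10 = 5 * √5 * φ⁻¹ ^ 5 := by
  have h : (φ * ψ) ^ 5 = -1 := by rw [goldenRatio_mul_goldenConj]; norm_num
  rw [← goldenRatio_pow_five_sub_goldenConj_pow_five, inv_goldenRatio]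
  linear_combination h

lemma sqrt_five_mul_sqrt_five_mul_pow_five {x : ℝ} (hx : 0 ≤ x) :
    √(5 * √5 * x ^ 5) = 5 ^ ((3 : ℝ) / 4) * x ^ ((5 : ℝ) / 2) := by
  have h5 : 5 * √5 = (5 : ℝ) ^ ((3 : ℝ) / 2) := by
    rw [show (3 : ℝ) / 2 = 1 + 1 / 2 by norm_num, rpow_add (by norm_num), rpow_one, sqrt_eq_rpow]
  rw [sqrt_eq_iff_mul_self_eq (by positivity) (by positivity), mul_mul_mul_comm,
    ← rpow_add (by norm_num), ← rpow_add' hx (by norm_num), h5]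
  norm_num

lemma one_sub_mul_mul_div_add_mul {a s u : ℝ} (ha : a * (s - a) = 1) (hu : 1 + u ≠ 0) :
    (1 - a * (a * u)) / (a + a * u) = s / (1 + u) - a := by
  have ha0 : a ≠ 0 := left_ne_zero_of_mul_eq_one ha
  rw [div_sub' hu, ← mul_one_add, div_eq_div_iff (mul_ne_zero ha0 hu) hu]
  linear_combination -(1 + u) * ha

lemma goldenRatio_mul_sqrt_five_sub_goldenRatio : φ * (√5 - φ) = 1 := by
  rw [← goldenRatio_sub_goldenConj, sub_sub_cancel_left, mul_neg, goldenRatio_mul_goldenConj, neg_neg]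

end

theorem stmt_17 (φ t : ℝ) (hφ : φ = (1 + Real.sqrt 5) / 2)
    (ht : t = (Real.sqrt (φ ^ 10 + 1) - φ ^ 5) ^ ((1 : ℝ) / 5)) :
    (1 - φ * t) / (φ + t) =
      Real.sqrt 5 /
        (1 + ((5 : ℝ) ^ ((3 : ℝ) / 4) *
            ((Real.sqrt 5 - 1) / 2) ^ ((5 : ℝ) / 2) - 1) ^ ((1 : ℝ) / 5)) -
      (Real.sqrt 5 + 1) / 2 := by
  obtain rfl : φ = goldenRatio := hφ
  have hinv : (√5 - 1) / 2 = goldenRatio⁻¹ := by rw [inv_goldenRatio]; ring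
  have hsqrt : √(1 + goldenRatio⁻¹ ^ 10) = 5 ^ ((3 : ℝ) / 4) * goldenRatio⁻¹ ^ ((5 : ℝ) / 2) := by
    rw [one_add_inv_goldenRatio_pow_ten,
      sqrt_five_mul_sqrt_five_mul_pow_five (inv_nonneg.mpr goldenRatio_pos.le)]
  have hu : 0 ≤ (√(1 + goldenRatio⁻¹ ^ 10) - 1) ^ ((1 : ℝ) / 5) :=
    rpow_nonneg (sub_nonneg.mpr (one_le_sqrt_one_add_pow_ten _)) _
  rw [ht, rpow_one_div_five_sqrt_pow_ten_add_one_sub goldenRatio_pos, hinv, ← hsqrt,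
    add_comm √5 1]
  exact one_sub_mul_mul_div_add_mul goldenRatio_mul_sqrt_five_sub_goldenRatio (by positivity)
end

section
/- Let k be an integer and let r, x₁, x₂ be real numbers with x₁ + x₂ = 2r, x₁ + x₂ ≠ 0, and (2^k − x₁x₂)/(x₁ + x₂) = 1. Then r² + 2r − 2^k ≥ 0, both x₁ and x₂ are roots of x² − 2rx − (2r − 2^k) = 0, and {x₁, x₂} = {r + √(r² + 2r − 2^k), r − √(r² + 2r − 2^k)}. Moreover, if additionally 0 < r ≤ 2^{k−1}, then both roots lie in the interval [0, 2^k], and the two roots are equal if and only if r = √(2^k + 1) − 1. -/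
/-
Since `x₁ + x₂ = 2r` and, clearing the denominator, `x₁ x₂ = 2^k - 2r`, Vieta's formulas make
`x₁, x₂` the roots of `x² - 2rx - (2r - 2^k)`, whose discriminant `r² + 2r - 2^k` is `((x₁ - x₂)/2)²`.
Under `0 < r ≤ 2^(k-1)` the bounds on the roots reduce to `2r ≤ 2^k` after squaring, and the
roots coincide exactly when the discriminant vanishes, i.e. when `(r + 1)² = 2^k + 1`.
-/

namespace Real

theorem sq_sub_mul_eq_sq_half_sub {x₁ x₂ r D : ℝ} (hsum : x₁ + x₂ = 2 * r)
    (hprod : x₁ * x₂ = r ^ 2 - D) : D = ((x₁ - x₂) / 2) ^ 2 := by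
  have hx₂ : x₂ = 2 * r - x₁ := by linarith
  subst hx₂
  linear_combination hprod

theorem pair_eq_add_sqrt_sub_sqrt_of_sum_of_mul {x₁ x₂ r D : ℝ} (hsum : x₁ + x₂ = 2 * r)
    (hprod : x₁ * x₂ = r ^ 2 - D) : ({x₁, x₂} : Set ℝ) = {r + √D, r - √D} := by
  have hD : D = ((x₁ - x₂) / 2) ^ 2 := sq_sub_mul_eq_sq_half_sub hsum hprod
  obtain ⟨d, rfl, rfl⟩ : ∃ d, x₁ = r + d ∧ x₂ = r - d :=
    ⟨(x₁ - x₂) / 2, by linarith, by linarith⟩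
  rw [hD, sqrt_sq_eq_abs, show (r + d - (r - d)) / 2 = d by ring]
  rcases abs_choice d with habs | habs <;> rw [habs]
  rw [Set.pair_comm, sub_neg_eq_add, ← sub_eq_add_neg]

theorem sub_sqrt_sq_add_two_mul_sub_nonneg {r P : ℝ} (hr : 0 ≤ r) (hrP : 2 * r ≤ P) :
    0 ≤ r - √(r ^ 2 + 2 * r - P) := by
  have : √(r ^ 2 + 2 * r - P) ≤ r := (sqrt_le_iff).2 ⟨hr, by linarith⟩
  linarith

theorem add_sqrt_sq_add_two_mul_sub_le {r P : ℝ} (hr : 0 ≤ r) (hrP : 2 * r ≤ P) :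
    r + √(r ^ 2 + 2 * r - P) ≤ P := by
  have : √(r ^ 2 + 2 * r - P) ≤ P - r :=
    (sqrt_le_iff).2 ⟨by linarith, by nlinarith⟩
  linarith

theorem add_sqrt_eq_sub_sqrt_iff {a D : ℝ} : a + √D = a - √D ↔ D ≤ 0 := by
  rw [← sqrt_eq_zero']
  constructor <;> intro h <;> linarith

theorem sq_add_two_mul_sub_eq_zero_iff {r P : ℝ} (hr : -1 ≤ r) (hP : -1 ≤ P) :
    r ^ 2 + 2 * r - P = 0 ↔ r = √(P + 1) - 1 := by
  rw [eq_sub_iff_add_eq, eq_comm (a := r + 1), sqrt_eq_iff_eq_sq (by linarith) (by linarith)]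
  constructor <;> intro h <;> linarith

end Real

theorem stmt_19 (k : ℤ) (r x₁ x₂ : ℝ) (hr : x₁ + x₂ = 2 * r) (hx : x₁ + x₂ ≠ 0)
    (h : ((2 : ℝ) ^ k - x₁ * x₂) / (x₁ + x₂) = 1) :
    r ^ 2 + 2 * r - (2 : ℝ) ^ k ≥ 0 ∧
    x₁ ^ 2 - 2 * r * x₁ - (2 * r - (2 : ℝ) ^ k) = 0 ∧
    x₂ ^ 2 - 2 * r * x₂ - (2 * r - (2 : ℝ) ^ k) = 0 ∧
    ({x₁, x₂} : Set ℝ) =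
      {r + Real.sqrt (r ^ 2 + 2 * r - (2 : ℝ) ^ k),
       r - Real.sqrt (r ^ 2 + 2 * r - (2 : ℝ) ^ k)} ∧
    (0 < r → r ≤ (2 : ℝ) ^ (k - 1) →
      (0 ≤ r - Real.sqrt (r ^ 2 + 2 * r - (2 : ℝ) ^ k) ∧
        r + Real.sqrt (r ^ 2 + 2 * r - (2 : ℝ) ^ k) ≤ (2 : ℝ) ^ k) ∧
      (r + Real.sqrt (r ^ 2 + 2 * r - (2 : ℝ) ^ k) =
          r - Real.sqrt (r ^ 2 + 2 * r - (2 : ℝ) ^ k) ↔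
        r = Real.sqrt ((2 : ℝ) ^ k + 1) - 1)) := by
  have hprod : x₁ * x₂ = r ^ 2 - (r ^ 2 + 2 * r - (2 : ℝ) ^ k) := by
    linear_combination -(div_eq_one_iff_eq hx).mp h - hr
  have hD₀ : 0 ≤ r ^ 2 + 2 * r - (2 : ℝ) ^ k := by
    rw [Real.sq_sub_mul_eq_sq_half_sub hr hprod]
    positivity
  refine ⟨hD₀, by linear_combination x₁ * hr - hprod,
    by linear_combination x₂ * hr - hprod,
    Real.pair_eq_add_sqrt_sub_sqrt_of_sum_of_mul hr hprod, fun hr₀ hrk => ?_⟩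
  have hP : (0 : ℝ) < 2 ^ k := zpow_pos two_pos k
  have h2r : 2 * r ≤ (2 : ℝ) ^ k := by
    rwa [zpow_sub_one₀ two_ne_zero, le_mul_inv_iff₀ two_pos, mul_comm] at hrk
  refine ⟨⟨Real.sub_sqrt_sq_add_two_mul_sub_nonneg hr₀.le h2r,
    Real.add_sqrt_sq_add_two_mul_sub_le hr₀.le h2r⟩, ?_⟩
  rw [Real.add_sqrt_eq_sub_sqrt_iff, hD₀.ge_iff_eq',
    Real.sq_add_two_mul_sub_eq_zero_iff (by linarith) (by linarith)]
end
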